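/- Let k ≥ 0 and d ≥ 2 be integers, and let Č_1, Č_2 ⊆ ℝ^{d−1} be finite point sets. Then for all sufficiently large R > 0, we have ψ̂_k({0} × Č_1, {0} × R·Č_2) ≥ ψ̌(Č_1, Č_2), where {0} × S ⊆ ℝ^d denotes the image of S ⊆ ℝ^{d−1} under the embedding that prepends a first coordinate equal to 0, and R·Č_2 = {R·c : c ∈ Č_2}. -/

import Mathlib

/-- The effective distance function `D̂_{k,Û}` on the disjoint union `ℝ^d ⊔ ℝ^d`
(left summand for points of `Ĉ_1`, right summand for points of `Ĉ_2`):
`D̂¹_{k,Û}(ĉ) = ‖ĉ − û_1‖ + ((k+1)ĉ + û_2)·e_1` on the left and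
`D̂²_{k,Û}(ĉ) = ‖ĉ − û_2‖ + ((k+1)ĉ + û_1)·e_1` on the right, where `e_1` is the
first standard basis vector (so `v·e_1` is the first coordinate of `v`). -/
noncomputable def Dhat {d : ℕ} (hd : 0 < d) (k : ℕ)
    (U : EuclideanSpace ℝ (Fin d) × EuclideanSpace ℝ (Fin d)) :
    EuclideanSpace ℝ (Fin d) ⊕ EuclideanSpace ℝ (Fin d) → ℝ
  | Sum.inl c => dist c U.1 + (((k : ℝ) + 1) * c ⟨0, hd⟩ + U.2 ⟨0, hd⟩)
  | Sum.inr c => dist c U.2 + (((k : ℝ) + 1) * c ⟨0, hd⟩ + U.1 ⟨0, hd⟩)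

/-- `Ψ̂_k(Ĉ_1, Ĉ_2)`: the set of orderings of the disjoint union `Ĉ_1 ⊔ Ĉ_2`
(encoded as injective enumerations `σ : Fin n → ℝ^d ⊕ ℝ^d`, left components lying in
`Ĉ_1` and right components in `Ĉ_2`) along which `D̂_{k,Û}` is strictly increasing,
for some pair `Û ∈ ℝ^d × ℝ^d`. -/
def PsiHatSet {d : ℕ} (hd : 0 < d) (k n : ℕ)
    (C₁ C₂ : Finset (EuclideanSpace ℝ (Fin d))) :
    Set (Fin n → (EuclideanSpace ℝ (Fin d) ⊕ EuclideanSpace ℝ (Fin d))) :=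
  {σ | Function.Injective σ ∧
    (∀ i, Sum.elim (fun c => c ∈ C₁) (fun c => c ∈ C₂) (σ i)) ∧
    ∃ U : EuclideanSpace ℝ (Fin d) × EuclideanSpace ℝ (Fin d),
      StrictMono fun i => Dhat hd k U (σ i)}

/-- `ψ̂_k(Ĉ_1, Ĉ_2) = |Ψ̂_k(Ĉ_1, Ĉ_2)|`. -/
noncomputable def psiHat {d : ℕ} (hd : 0 < d) (k : ℕ)
    (C₁ C₂ : Finset (EuclideanSpace ℝ (Fin d))) : ℕ :=
  Nat.card (PsiHatSet hd k (C₁.card + C₂.card) C₁ C₂)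

/-- The function `Ď_{V̌}` for `V̌ = (v̌_1, v̌_2, x̌, y̌)`, on the disjoint union
`ℝ^{d−1} ⊔ ℝ^{d−1}` (left summand for points of `Č_1`, right for `Č_2`):
`Ď¹_{V̌}(č) = √(x̌² + ‖č − v̌_1‖²) − x̌` on the left, and `Ď²_{V̌}(č) = y̌ ‖č − v̌_2‖²`
on the right. -/
noncomputable def Dcheck {e : ℕ} (v₁ v₂ : EuclideanSpace ℝ (Fin e)) (x y : ℝ) :
    EuclideanSpace ℝ (Fin e) ⊕ EuclideanSpace ℝ (Fin e) → ℝ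
  | Sum.inl c => Real.sqrt (x ^ 2 + dist c v₁ ^ 2) - x
  | Sum.inr c => y * dist c v₂ ^ 2

/-- `Ψ̌(Č_1, Č_2)`: the set of orderings of `Č_1 ⊔ Č_2` (injective enumerations
`σ : Fin n → ℝ^{d−1} ⊕ ℝ^{d−1}`, left components in `Č_1`, right in `Č_2`) along which
`Ď_{V̌}` is strictly increasing, for some `V̌ = (v̌_1, v̌_2, x̌, y̌)` with `y̌ > 0`. -/
def PsiCheckSet {e : ℕ} (n : ℕ) (C₁ C₂ : Finset (EuclideanSpace ℝ (Fin e))) :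
    Set (Fin n → (EuclideanSpace ℝ (Fin e) ⊕ EuclideanSpace ℝ (Fin e))) :=
  {σ | Function.Injective σ ∧
    (∀ i, Sum.elim (fun c => c ∈ C₁) (fun c => c ∈ C₂) (σ i)) ∧
    ∃ (v₁ v₂ : EuclideanSpace ℝ (Fin e)) (x y : ℝ), 0 < y ∧
      StrictMono fun i => Dcheck v₁ v₂ x y (σ i)}

/-- `ψ̌(Č_1, Č_2) = |Ψ̌(Č_1, Č_2)|`. -/
noncomputable def psiCheck {e : ℕ} (C₁ C₂ : Finset (EuclideanSpace ℝ (Fin e))) : ℕ :=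
  Nat.card (PsiCheckSet (C₁.card + C₂.card) C₁ C₂)

/-- `{0} × (R·S) ⊆ ℝ^{e+1}`: the image of `S ⊆ ℝ^e` under scaling by `R` followed by
the embedding prepending a first coordinate equal to `0`. -/
noncomputable def embScale (e : ℕ) (R : ℝ) (S : Finset (EuclideanSpace ℝ (Fin e))) :
    Finset (EuclideanSpace ℝ (Fin (e + 1))) := by
  classical
  exact S.image fun c => (WithLp.toLp 2 (Fin.cons 0 (fun j => R * c j) : Fin (e + 1) → ℝ) : EuclideanSpace ℝ (Fin (e + 1)))


/-! ### Auxiliary machinery for the proof -/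

noncomputable def myCons {e : ℕ} (a : ℝ) (u : EuclideanSpace ℝ (Fin e)) :
    EuclideanSpace ℝ (Fin (e+1)) := WithLp.toLp 2 (Fin.cons a (WithLp.ofLp u) : Fin (e+1) → ℝ)

lemma dist_myCons {e : ℕ} (a b : ℝ) (u v : EuclideanSpace ℝ (Fin e)) :
    dist (myCons a u) (myCons b v) = Real.sqrt ((a - b)^2 + dist u v ^ 2) := by
  rw [EuclideanSpace.dist_eq, EuclideanSpace.dist_eq, Fin.sum_univ_succ]
  simp only [myCons, WithLp.ofLp_toLp, Fin.cons_zero, Fin.cons_succ]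
  rw [Real.sq_sqrt (by positivity)]
  congr 1
  rw [Real.dist_eq, sq_abs]

lemma myCons_zero {e : ℕ} (a : ℝ) (u : EuclideanSpace ℝ (Fin e)) (h : 0 < e + 1) :
    myCons a u ⟨0, h⟩ = a := by
  simp [myCons, Fin.mk_zero]

lemma myCons_tail_inj {e : ℕ} {a : ℝ} {u v : EuclideanSpace ℝ (Fin e)}
    (h : myCons a u = myCons a v) : u = v := by
  have := congrArg (fun w => Fin.tail (WithLp.ofLp w)) h
  exact WithLp.ofLp_injective 2 (by simpa [myCons, Fin.tail_cons] using this)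

lemma myCons_smul_inj {e : ℕ} {s : ℝ} (hs : s ≠ 0) :
    Function.Injective (fun c : EuclideanSpace ℝ (Fin e) => myCons 0 (s • c)) := by
  intro c c' h
  exact smul_right_injective _ hs (myCons_tail_inj h)

lemma le_sqrt_add (x s : ℝ) (hs : 0 ≤ s) : x ≤ Real.sqrt (x^2 + s) := by
  rcases le_or_gt x 0 with h | h
  · exact h.trans (Real.sqrt_nonneg _)
  · have hx : x = Real.sqrt (x^2) := (Real.sqrt_sq h.le).symm
    rw [hx]
    exact Real.sqrt_le_sqrt (by nlinarith)

lemma embFun_eq {e : ℕ} (R : ℝ) (c : EuclideanSpace ℝ (Fin e)) :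
    (WithLp.toLp 2 (Fin.cons 0 (fun j => R * c j) : Fin (e + 1) → ℝ) : EuclideanSpace ℝ (Fin (e + 1))) = myCons 0 (R • c) := rfl

lemma Dhat_inl {e : ℕ} (k : ℕ) (x t : ℝ) (w₁ w₂ : EuclideanSpace ℝ (Fin e))
    (c : EuclideanSpace ℝ (Fin e)) :
    Dhat (Nat.succ_pos e) k (myCons x w₁, myCons t w₂) (Sum.inl (myCons 0 c))
      = Real.sqrt (x^2 + dist c w₁ ^ 2) + t := by
  simp only [Dhat]
  rw [dist_myCons, myCons_zero, myCons_zero]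
  rw [zero_sub, neg_sq]
  ring

lemma Dhat_inr {e : ℕ} (k : ℕ) (x t : ℝ) (w₁ w₂ : EuclideanSpace ℝ (Fin e))
    (c : EuclideanSpace ℝ (Fin e)) :
    Dhat (Nat.succ_pos e) k (myCons x w₁, myCons t w₂) (Sum.inr (myCons 0 c))
      = Real.sqrt (t^2 + dist c w₂ ^ 2) + x := by
  simp only [Dhat]
  rw [dist_myCons, myCons_zero, myCons_zero]
  rw [zero_sub, neg_sq]
  ring

/-- The embedding of the disjoint union: left points get scaled by 1, right ones by `R`. -/
noncomputable def mapPt (e : ℕ) (R : ℝ) :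
    (EuclideanSpace ℝ (Fin e) ⊕ EuclideanSpace ℝ (Fin e)) →
      (EuclideanSpace ℝ (Fin (e+1)) ⊕ EuclideanSpace ℝ (Fin (e+1))) :=
  Sum.map (fun c => myCons 0 ((1:ℝ) • c)) (fun c => myCons 0 (R • c))

lemma mapPt_inj {e : ℕ} {R : ℝ} (hR : R ≠ 0) : Function.Injective (mapPt e R) :=
  (myCons_smul_inj one_ne_zero).sumMap (myCons_smul_inj hR)

lemma finite_constrained {α : Type*} (n : ℕ) (C₁ C₂ : Finset α) :
    {σ : Fin n → α ⊕ α |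
      ∀ i, Sum.elim (fun c => c ∈ C₁) (fun c => c ∈ C₂) (σ i)}.Finite := by
  have hT : (Sum.inl '' (C₁ : Set α) ∪ Sum.inr '' (C₂ : Set α)).Finite :=
    ((C₁.finite_toSet.image _).union (C₂.finite_toSet.image _))
  refine (Set.Finite.pi (fun _ : Fin n => hT)).subset ?_
  intro σ hσ
  intro i _
  rcases h : σ i with c | c
  · exact Set.mem_union_left _ ⟨c, by simpa [h] using hσ i, rfl⟩
  · exact Set.mem_union_right _ ⟨c, by simpa [h] using hσ i, rfl⟩

lemma psiCheckSet_finite {e n : ℕ} (C₁ C₂ : Finset (EuclideanSpace ℝ (Fin e))) :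
    (PsiCheckSet n C₁ C₂).Finite :=
  (finite_constrained n C₁ C₂).subset (fun _ hσ => hσ.2.1)

lemma psiHatSet_finite {d : ℕ} (hd : 0 < d) (k n : ℕ)
    (C₁ C₂ : Finset (EuclideanSpace ℝ (Fin d))) :
    (PsiHatSet hd k n C₁ C₂).Finite :=
  (finite_constrained n C₁ C₂).subset (fun _ hσ => hσ.2.1)

/-- Key per-pair estimate. -/
lemma pair_bound {e : ℕ} (k : ℕ) (v₁ v₂ : EuclideanSpace ℝ (Fin e)) (x y : ℝ)
    (hy : 0 < y) (a b : EuclideanSpace ℝ (Fin e) ⊕ EuclideanSpace ℝ (Fin e))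
    (hab : Dcheck v₁ v₂ x y a < Dcheck v₁ v₂ x y b) :
    ∃ r : ℝ, 1 ≤ r ∧ ∀ R : ℝ, r ≤ R →
      Dhat (Nat.succ_pos e) k (myCons x v₁, myCons (R^2/(2*y)) (R • v₂)) (mapPt e R a)
        < Dhat (Nat.succ_pos e) k (myCons x v₁, myCons (R^2/(2*y)) (R • v₂)) (mapPt e R b) := by
  rcases a with c | c <;> rcases b with c' | c'
  · -- inl, inl
    refine ⟨1, le_refl 1, fun R hR => ?_⟩
    simp only [mapPt, Sum.map_inl, one_smul]
    rw [Dhat_inl, Dhat_inl]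
    simp only [Dcheck] at hab
    linarith
  · -- inl, inr : the hard case, need R large
    simp only [Dcheck] at hab
    set Dc : ℝ := Real.sqrt (x^2 + dist c v₁ ^ 2) - x with hDc
    set g : ℝ := y * dist c' v₂ ^ 2 - Dc with hg
    have hgpos : 0 < g := by simp only [hg, hDc]; linarith
    have hDcnn : 0 ≤ Dc := by
      have := le_sqrt_add x (dist c v₁ ^ 2) (by positivity)
      simp only [hDc]; linarith
    refine ⟨Real.sqrt (y * Dc^2 / g) + 1, le_add_of_nonneg_left (Real.sqrt_nonneg _), fun R hR => ?_⟩
    have hRpos : 0 < R := lt_of_lt_of_le (by positivity) hR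
    have hR2 : y * Dc^2 / g < R^2 := by
      have h1 : Real.sqrt (y * Dc^2 / g) < R := by
        have : (0:ℝ) ≤ Real.sqrt (y * Dc^2 / g) := Real.sqrt_nonneg _
        linarith
      calc y * Dc^2 / g = Real.sqrt (y * Dc^2 / g) ^ 2 := by
            rw [Real.sq_sqrt (by positivity)]
        _ < R ^ 2 := by nlinarith [Real.sqrt_nonneg (y * Dc^2 / g)]
    have hkey : y * Dc^2 < R^2 * g := (div_lt_iff₀ hgpos).mp hR2
    simp only [mapPt, Sum.map_inl, Sum.map_inr, one_smul]
    rw [Dhat_inl, Dhat_inr]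
    set t : ℝ := R^2/(2*y) with ht
    have htpos : 0 < t := by positivity
    have hty : 2 * y * t = R^2 := by rw [ht]; field_simp [hy.ne']
    rw [dist_smul₀, Real.norm_eq_abs, abs_of_pos hRpos]
    -- goal: sqrt (x^2 + dist c v₁^2) + t < sqrt (t^2 + (R * dist c' v₂)^2) + x
    have hsq : (Dc + t)^2 < t^2 + (R * dist c' v₂)^2 := by
      have hD2 : Dc + x = Real.sqrt (x^2 + dist c v₁ ^ 2) := by simp [hDc]
      nlinarith [sq_nonneg Dc, mul_pos hy htpos, hgpos, hDcnn]
    have hlt : Dc + t < Real.sqrt (t^2 + (R * dist c' v₂)^2) := by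
      have h2 := Real.sqrt_lt_sqrt (by positivity) hsq
      rwa [Real.sqrt_sq (by linarith)] at h2
    have hDx : Real.sqrt (x^2 + dist c v₁ ^ 2) = Dc + x := by simp [hDc]
    rw [hDx]
    linarith
  · -- inr, inl
    refine ⟨1, le_refl 1, fun R hR => ?_⟩
    have hRpos : 0 < R := lt_of_lt_of_le one_pos hR
    simp only [Dcheck] at hab
    set Dc' : ℝ := Real.sqrt (x^2 + dist c' v₁ ^ 2) - x with hDc'
    have hDnn : 0 ≤ Dc' := by
      have := le_sqrt_add x (dist c' v₁ ^ 2) (by positivity)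
      simp only [hDc']; linarith
    simp only [mapPt, Sum.map_inl, Sum.map_inr, one_smul]
    rw [Dhat_inr, Dhat_inl]
    set t : ℝ := R^2/(2*y) with ht
    have htpos : 0 < t := by positivity
    have hty : 2 * y * t = R^2 := by rw [ht]; field_simp [hy.ne']
    rw [dist_smul₀, Real.norm_eq_abs, abs_of_pos hRpos]
    have hsq : t^2 + (R * dist c v₂)^2 < (Dc' + t)^2 := by
      nlinarith [sq_nonneg Dc', mul_pos hy htpos, dist_nonneg (x := c) (y := v₂), hDnn]
    have hlt : Real.sqrt (t^2 + (R * dist c v₂)^2) < Dc' + t := by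
      have h2 := Real.sqrt_lt_sqrt (by positivity) hsq
      rwa [Real.sqrt_sq (by linarith)] at h2
    have hDx : Real.sqrt (x^2 + dist c' v₁ ^ 2) = Dc' + x := by simp [hDc']
    linarith
  · -- inr, inr
    refine ⟨1, le_refl 1, fun R hR => ?_⟩
    have hRpos : 0 < R := lt_of_lt_of_le one_pos hR
    simp only [Dcheck] at hab
    simp only [mapPt, Sum.map_inr]
    rw [Dhat_inr, Dhat_inr]
    set t : ℝ := R^2/(2*y) with ht
    rw [dist_smul₀, dist_smul₀, Real.norm_eq_abs, abs_of_pos hRpos]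
    have h1 : dist c v₂ ^ 2 < dist c' v₂ ^ 2 := (mul_lt_mul_iff_right₀ hy).mp hab
    have hlt : (R * dist c v₂)^2 < (R * dist c' v₂)^2 := by
      nlinarith [mul_lt_mul_of_pos_left h1 (pow_pos hRpos 2)]
    have h2 := Real.sqrt_lt_sqrt (by positivity : (0:ℝ) ≤ t^2 + (R * dist c v₂)^2)
      (by linarith : t^2 + (R * dist c v₂)^2 < t^2 + (R * dist c' v₂)^2)
    linarith

/-- Per-ordering lemma: each element of `Ψ̌` maps into `Ψ̂` for all large `R`. -/
lemma exists_R0 {e : ℕ} (k n : ℕ) (C₁ C₂ : Finset (EuclideanSpace ℝ (Fin e)))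
    (σ : Fin n → (EuclideanSpace ℝ (Fin e) ⊕ EuclideanSpace ℝ (Fin e)))
    (hσ : σ ∈ PsiCheckSet n C₁ C₂) :
    ∃ r : ℝ, 0 < r ∧ ∀ R : ℝ, r ≤ R →
      (mapPt e R ∘ σ) ∈
        PsiHatSet (Nat.succ_pos e) k n (embScale e 1 C₁) (embScale e R C₂) := by
  obtain ⟨hinj, hmem, v₁, v₂, x, y, hy, hmono⟩ := hσ
  have key : ∀ p : Fin n × Fin n, ∃ r : ℝ, 1 ≤ r ∧ ∀ R : ℝ, r ≤ R → p.1 < p.2 →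
      Dhat (Nat.succ_pos e) k (myCons x v₁, myCons (R^2/(2*y)) (R • v₂)) (mapPt e R (σ p.1))
        < Dhat (Nat.succ_pos e) k (myCons x v₁, myCons (R^2/(2*y)) (R • v₂))
            (mapPt e R (σ p.2)) := by
    intro p
    by_cases hp : p.1 < p.2
    · obtain ⟨r, hr1, hr⟩ := pair_bound k v₁ v₂ x y hy (σ p.1) (σ p.2) (hmono hp)
      exact ⟨r, hr1, fun R hR _ => hr R hR⟩
    · exact ⟨1, le_refl 1, fun R _ hlt => absurd hlt hp⟩
  choose ρ hρ1 hρ using key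
  obtain ⟨M, hM⟩ := Finite.exists_le ρ
  refine ⟨max M 1, lt_of_lt_of_le one_pos (le_max_right _ _), fun R hR => ?_⟩
  have hR1 : (1:ℝ) ≤ R := le_trans (le_max_right _ _) hR
  have hRpos : (0:ℝ) < R := lt_of_lt_of_le one_pos hR1
  refine ⟨(mapPt_inj (ne_of_gt hRpos)).comp hinj, ?_, ?_⟩
  · intro i
    have hi := hmem i
    rcases h : σ i with c | c
    · rw [h] at hi
      simp only [Function.comp_apply, h, mapPt, Sum.map_inl, Sum.elim_inl]
      rw [← embFun_eq]
      unfold embScale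
      exact @Finset.mem_image_of_mem _ _ _ _ _ _ hi
    · rw [h] at hi
      simp only [Function.comp_apply, h, mapPt, Sum.map_inr, Sum.elim_inr]
      rw [← embFun_eq]
      unfold embScale
      exact @Finset.mem_image_of_mem _ _ _ _ _ _ hi
  · refine ⟨(myCons x v₁, myCons (R^2/(2*y)) (R • v₂)), fun i j hij => ?_⟩
    exact hρ (i, j) R (le_trans (le_trans (hM (i, j)) (le_max_left _ _)) hR) hij

lemma embScale_card {e : ℕ} {R : ℝ} (hR : R ≠ 0) (S : Finset (EuclideanSpace ℝ (Fin e))) :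
    (embScale e R S).card = S.card := by
  have hinj : Function.Injective
      (fun c : EuclideanSpace ℝ (Fin e) =>
        (WithLp.toLp 2 (Fin.cons 0 (fun j => R * c j) : Fin (e + 1) → ℝ) : EuclideanSpace ℝ (Fin (e + 1)))) := by
    exact fun c c' h => myCons_smul_inj hR h
  unfold embScale
  exact @Finset.card_image_of_injective _ _ _ _ S hinj

/-- For `k ≥ 0` and `d = e + 1 ≥ 2`, and finite point sets `Č_1, Č_2 ⊆ ℝ^{d−1}`:
for all sufficiently large `R > 0` we have
`ψ̂_k({0} × Č_1, {0} × R·Č_2) ≥ ψ̌(Č_1, Č_2)`. -/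
theorem psiHat_ge_psiCheck (e k : ℕ) (he : 1 ≤ e)
    (C₁ C₂ : Finset (EuclideanSpace ℝ (Fin e))) :
    ∃ R₀ : ℝ, 0 < R₀ ∧ ∀ R : ℝ, R₀ ≤ R →
      psiCheck C₁ C₂ ≤
        psiHat (Nat.succ_pos e) k (embScale e 1 C₁) (embScale e R C₂) := by
  classical
  set n := C₁.card + C₂.card with hn
  have hfin : (PsiCheckSet n C₁ C₂).Finite := psiCheckSet_finite C₁ C₂
  haveI : Finite (PsiCheckSet n C₁ C₂) := hfin.to_subtype
  have hchoice : ∀ σ : PsiCheckSet n C₁ C₂, ∃ r : ℝ, 0 < r ∧ ∀ R : ℝ, r ≤ R →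
      (mapPt e R ∘ (σ : Fin n → _)) ∈
        PsiHatSet (Nat.succ_pos e) k n (embScale e 1 C₁) (embScale e R C₂) :=
    fun σ => exists_R0 k n C₁ C₂ σ σ.2
  choose ρ hρpos hρ using hchoice
  obtain ⟨M, hM⟩ := Finite.exists_le ρ
  refine ⟨max M 1, lt_of_lt_of_le one_pos (le_max_right _ _), fun R hR => ?_⟩
  have hR1 : (1:ℝ) ≤ R := le_trans (le_max_right _ _) hR
  have hRpos : (0:ℝ) < R := lt_of_lt_of_le one_pos hR1
  have hcard : (embScale e 1 C₁).card + (embScale e R C₂).card = n := by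
    rw [embScale_card one_ne_zero, embScale_card (ne_of_gt hRpos)]
  unfold psiCheck psiHat
  rw [hcard, ← hn]
  haveI : Finite (PsiHatSet (Nat.succ_pos e) k n (embScale e 1 C₁) (embScale e R C₂)) :=
    (psiHatSet_finite _ k n _ _).to_subtype
  refine Nat.card_le_card_of_injective
    (fun σ => (⟨mapPt e R ∘ (σ : Fin n → _),
      hρ σ R (le_trans (le_trans (hM σ) (le_max_left _ _)) hR)⟩ :
        PsiHatSet (Nat.succ_pos e) k n (embScale e 1 C₁) (embScale e R C₂))) ?_
  intro σ σ' h
  apply Subtype.ext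
  funext i
  exact mapPt_inj (ne_of_gt hRpos) (congrFun (congrArg Subtype.val h) i)
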